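/- (Projective spread law) Suppose U, V, W are nonzero vectors with a_U, a_V, a_W all nonzero, with the three projective quadrances q_u = q(V,W), q_v = q(U,W), q_w = q(U,V) all nonzero, and with all three quantities a_U·a_V − b_{UV}², a_U·a_W − b_{UW}², a_V·a_W − b_{VW}² nonzero. Then the projective spreads satisfy S_u/q_u = S_v/q_v = S_w/q_w. -/
import Mathlib


/-- The projective quadrance between the projective points `[U]` and `[V]`. -/
def projQuadrance {F : Type*} [Field F] {M : Type*} [AddCommGroup M] [Module F M]
    (B : LinearMap.BilinForm F M) (U V : M) : F :=
  1 - (B U V) ^ 2 / (B U U * B V V)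

/-- The projective spread between the projective lines `WU` and `WV`
(the spread at the vertex `[W]`). -/
def projSpread {F : Type*} [Field F] {M : Type*} [AddCommGroup M] [Module F M]
    (B : LinearMap.BilinForm F M) (W U V : M) : F :=
  1 - (B W W * B U V - B U W * B V W) ^ 2 /
      ((B U U * B W W - (B U W) ^ 2) * (B V V * B W W - (B V W) ^ 2))

theorem projective_spread_law
    {F : Type*} [Field F] (hchar : (2 : F) ≠ 0)
    {M : Type*} [AddCommGroup M] [Module F M]
    (B : LinearMap.BilinForm F M) (hsym : ∀ x y : M, B x y = B y x)
    (U V W : M) (hU : U ≠ 0) (hV : V ≠ 0) (hW : W ≠ 0)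
    (haU : B U U ≠ 0) (haV : B V V ≠ 0) (haW : B W W ≠ 0)
    (hqu : projQuadrance B V W ≠ 0) (hqv : projQuadrance B U W ≠ 0)
    (hqw : projQuadrance B U V ≠ 0)
    (hdUV : B U U * B V V - (B U V) ^ 2 ≠ 0)
    (hdUW : B U U * B W W - (B U W) ^ 2 ≠ 0)
    (hdVW : B V V * B W W - (B V W) ^ 2 ≠ 0)
 :
    projSpread B U V W / projQuadrance B V W =
        projSpread B V U W / projQuadrance B U W ∧
      projSpread B V U W / projQuadrance B U W =
        projSpread B W U V / projQuadrance B U V := by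
  have e1 : B V U = B U V := hsym V U
  have e2 : B W U = B U W := hsym W U
  have e3 : B W V = B V W := hsym W V
  have hdUV' : B V V * B U U - (B U V) ^ 2 ≠ 0 := by rw [mul_comm]; exact hdUV
  have hdUW' : B W W * B U U - (B U W) ^ 2 ≠ 0 := by rw [mul_comm]; exact hdUW
  have hdVW' : B W W * B V V - (B V W) ^ 2 ≠ 0 := by rw [mul_comm]; exact hdVW
  unfold projSpread projQuadrance
  simp only [e1, e2, e3]
  constructor <;> · field_simp; ring
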